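/- Let X be a topological space, r : X → A a continuous retraction onto a subspace A ⊆ X, m ∈ A and l ∈ X. If the lion has a strategy in X for starting points m and l, then the lion has a strategy in A for starting points m and r(l). -/

import Mathlib

/-- A continuous path `[0,∞) → X` starting at `x`. -/
def PathFrom (X : Type*) [TopologicalSpace X] (x : X) : Type _ :=
  {γ : NNReal → X // Continuous γ ∧ γ 0 = x}

/-- A strategy for the lion: man starts at `m`, lion at `l`; the lion captures the man
at some time, and the no-lookahead rule holds. -/
def IsLionStrategy {X : Type*} [TopologicalSpace X] (m l : X)
    (S : PathFrom X m → PathFrom X l) : Prop :=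
  (∀ α : PathFrom X m, ∃ t : NNReal, (S α).1 t = α.1 t) ∧
  (∀ (α α' : PathFrom X m) (t : NNReal),
    (∀ s < t, α.1 s = α'.1 s) → ∀ s ≤ t, (S α).1 s = (S α').1 s)

/-- A strategy for the man: man starts at `m`, lion at `l`; the man evades the lion
at all times, and the no-lookahead rule holds. -/
def IsManStrategy {X : Type*} [TopologicalSpace X] (m l : X)
    (S : PathFrom X l → PathFrom X m) : Prop :=
  (∀ (β : PathFrom X l) (t : NNReal), (S β).1 t ≠ β.1 t) ∧
  (∀ (β β' : PathFrom X l) (t : NNReal),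
    (∀ s < t, β.1 s = β'.1 s) → ∀ s ≤ t, (S β).1 s = (S β').1 s)

/-! The lion plays its `X`-strategy against the man's path viewed in `X`, and the retraction
projects each lion path back into `A`. Capture survives because `r` fixes the man's positions,
and no-lookahead survives because `r` acts pointwise in time. -/

namespace PathFrom

variable {X Y : Type*} [TopologicalSpace X] [TopologicalSpace Y]

def map {x : X} (f : X → Y) (hf : Continuous f) (γ : PathFrom X x) : PathFrom Y (f x) :=
  ⟨f ∘ γ.1, hf.comp γ.2.1, congrArg f γ.2.2⟩

@[simp]
theorem map_apply {x : X} (f : X → Y) (hf : Continuous f) (γ : PathFrom X x) (t : NNReal) :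
    (γ.map f hf).1 t = f (γ.1 t) :=
  rfl

end PathFrom

theorem IsLionStrategy.retract {X Y : Type*} [TopologicalSpace X] [TopologicalSpace Y]
    {i : Y → X} {r : X → Y} (hi : Continuous i) (hr : Continuous r)
    (hri : Function.LeftInverse r i) {m : Y} {l : X} {S : PathFrom X (i m) → PathFrom X l}
    (hS : IsLionStrategy (i m) l S) :
    IsLionStrategy m (r l) fun α => (S (α.map i hi)).map r hr := by
  refine ⟨fun α => ?_, fun α α' t hagree s hs => ?_⟩
  · obtain ⟨t, ht⟩ := hS.1 (α.map i hi)
    exact ⟨t, by rw [PathFrom.map_apply, ht, PathFrom.map_apply, hri]⟩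
  · exact congrArg r (hS.2 _ _ t (fun s hs => congrArg i (hagree s hs)) s hs)

/-- If `r : X → A` is a continuous retraction onto a subspace `A`, `m ∈ A`,
`l ∈ X`, and the lion has a strategy in `X` for starting points `m, l`, then the lion has
a strategy in `A` for starting points `m, r l`. -/
theorem stmt_13 {X : Type*} [TopologicalSpace X] (A : Set X)
    (r : X → A) (hr : Continuous r) (hretr : ∀ a : A, r (a : X) = a)
    (m : A) (l : X)
    (h : ∃ S : PathFrom X (m : X) → PathFrom X l, IsLionStrategy (m : X) l S) :
    ∃ S : PathFrom A m → PathFrom A (r l), IsLionStrategy m (r l) S := by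
  obtain ⟨S, hS⟩ := h
  exact ⟨_, hS.retract continuous_subtype_val hr hretr⟩
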